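/- In every parity game augmented with co-live edges, Player 0 has a single positional (memoryless) strategy that is winning from every vertex of her winning region of the augmented game (G, Parity(ℙ), ψ_colive(Ec)). -/

import Mathlib

universe u

/-- A two-player game graph: finite-intended vertex set `V`, an ownership function
(`owner v = 0` means `v` is a Player-0 vertex, `owner v = 1` a Player-1 vertex),
and an edge relation such that every vertex has at least one outgoing edge. -/
structure GameGraph (V : Type u) where
  owner : V → Fin 2
  E : V → V → Prop
  exists_succ : ∀ v, ∃ w, E v w

variable {V : Type u}

/-- A play of the game graph: an infinite sequence of vertices following edges. -/
def IsPlay (G : GameGraph V) (ρ : ℕ → V) : Prop :=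
  ∀ k, G.E (ρ k) (ρ (k + 1))

/-- A (history-dependent) strategy: given the list of previously visited
vertices and the current vertex, it chooses a next vertex. -/
abbrev Strategy (V : Type u) := List V → V → V

/-- A strategy of Player `i` is valid if at each Player-`i` vertex it chooses
an edge of the game graph. -/
def StratValid (G : GameGraph V) (i : Fin 2) (σ : Strategy V) : Prop :=
  ∀ (h : List V) (v : V), G.owner v = i → G.E v (σ h v)

/-- A positional (memoryless) strategy ignores the history. -/
def Positional (σ : Strategy V) : Prop :=
  ∀ (h h' : List V) (v : V), σ h v = σ h' v

/-- A play is compliant with the strategy `σ` of Player `i` (a `σ`-play) if at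
every Player-`i` vertex it moves to the vertex chosen by `σ`. -/
def Compliant (G : GameGraph V) (i : Fin 2) (σ : Strategy V) (ρ : ℕ → V) : Prop :=
  ∀ k, G.owner (ρ k) = i → ρ (k + 1) = σ (List.ofFn fun j : Fin k => ρ j.val) (ρ k)

/-- `σ` is a winning strategy for Player `i` from `v`, where `W` is the set of
plays that are winning for Player `i`. -/
def WinsFrom (G : GameGraph V) (i : Fin 2) (W : Set (ℕ → V)) (σ : Strategy V) (v : V) : Prop :=
  StratValid G i σ ∧
    ∀ ρ : ℕ → V, IsPlay G ρ → Compliant G i σ ρ → ρ 0 = v → ρ ∈ W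

/-- The winning region of Player `i`: the vertices from which Player `i` has a
winning strategy. -/
def WinRegion (G : GameGraph V) (i : Fin 2) (W : Set (ℕ → V)) : Set V :=
  {v | ∃ σ, WinsFrom G i W σ v}

/-- A vertex occurs infinitely often along a play. -/
def InfOft (ρ : ℕ → V) (v : V) : Prop := ∀ n, ∃ k, n ≤ k ∧ ρ k = v

/-- An edge is taken infinitely often along a play. -/
def EdgeInfOft (ρ : ℕ → V) (e : V × V) : Prop :=
  ∀ n, ∃ k, n ≤ k ∧ ρ k = e.1 ∧ ρ (k + 1) = e.2

/-- Parity objective: the maximal priority occurring infinitely often is even. -/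
def ParityWin (P : V → ℕ) (ρ : ℕ → V) : Prop :=
  ∃ v, InfOft ρ v ∧ Even (P v) ∧ ∀ w, InfOft ρ w → P w ≤ P v

/-- The set of source vertices of a set of edges. -/
def srcSet (H : Set (V × V)) : Set V := {u | ∃ w, (u, w) ∈ H}

/-- Strong transition co-fairness assumption: every co-live edge is taken only
finitely often. -/
def psiColive (Ec : Set (V × V)) (ρ : ℕ → V) : Prop :=
  ∀ e ∈ Ec, ¬ EdgeInfOft ρ e


/-!
Subdivide every co-live edge `(u, w)` by a fresh vertex with `w` as its only successor and give
these vertices an even priority above all others. A play of the subdivided game is won by player 0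
exactly when the corresponding play of `G` takes some co-live edge infinitely often or satisfies
the parity condition, so the augmented game becomes an ordinary parity game on a finite arena.
By Zielonka's theorem it is positionally determined, and player 0's positional strategy there
restricts to a positional strategy of `G` (a move to a subdividing vertex is a move along its
edge). This strategy wins from every vertex of player 0's winning region in `G`: player 1's
positional strategy of the subdivided game loses there to player 0's winning strategy in `G`.
-/

open Set Filter

section Plays

variable {ρ : ℕ → V} {t : ℕ}

lemma infOft_iff_frequently {v : V} : InfOft ρ v ↔ ∃ᶠ k in atTop, ρ k = v :=
  frequently_atTop.symm

lemma infOft_shift {v : V} : InfOft (fun s => ρ (t + s)) v ↔ InfOft ρ v := by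
  refine ⟨fun h n => ?_, fun h n => ?_⟩
  · obtain ⟨k, hk, rfl⟩ := h n
    exact ⟨t + k, by omega, rfl⟩
  · obtain ⟨k, hk, rfl⟩ := h (t + n)
    exact ⟨k - t, by omega, by simp only [Nat.add_sub_cancel' (by omega : t ≤ k)]⟩

lemma parityWin_shift {P : V → ℕ} : ParityWin P (fun s => ρ (t + s)) ↔ ParityWin P ρ := by
  simp only [ParityWin, infOft_shift]

lemma parityWin_iff_of_infOft_max {P : V → ℕ} {v : V} (hv : InfOft ρ v)
    (hmax : ∀ w, InfOft ρ w → P w ≤ P v) : ParityWin P ρ ↔ Even (P v) := by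
  refine ⟨fun ⟨w, hw, heven, hwmax⟩ => ?_, fun h => ⟨v, hv, h, hmax⟩⟩
  rwa [le_antisymm (hwmax v hv) (hmax w hw)]

lemma exists_infOft_of_frequently [Finite V] {S : Set V} (h : ∃ᶠ k in atTop, ρ k ∈ S) :
    ∃ v ∈ S, InfOft ρ v := by
  obtain ⟨v, hv⟩ := frequently_exists.1 (h.mono fun k hk => ⟨ρ k, hk, rfl⟩ :
    ∃ᶠ k in atTop, ∃ v, v ∈ S ∧ ρ k = v)
  obtain ⟨-, hvS, -⟩ := hv.exists
  exact ⟨v, hvS, infOft_iff_frequently.2 (hv.mono fun _ => And.right)⟩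

end Plays

lemma fin_two_eq_one_sub_of_ne {a b : Fin 2} (h : a ≠ b) : a = 1 - b := by
  revert a b
  decide

lemma fin_two_union_apply_one_sub {α : Type*} (W : Fin 2 → Set α) (i : Fin 2) :
    W i ∪ W (1 - i) = W 0 ∪ W 1 := by
  fin_cases i <;> simp [union_comm]

namespace GameGraph

open scoped Classical

variable {G : GameGraph V} {P : V → ℕ} {a : Fin 2} {U T W : Set V} {ρ : ℕ → V} {v w : V}

section Subgames

def IsSubarena (G : GameGraph V) (U : Set V) : Prop :=
  ∀ v ∈ U, ∃ w ∈ U, G.E v w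

def PlayIn (G : GameGraph V) (U : Set V) (ρ : ℕ → V) : Prop :=
  ∀ k, ρ k ∈ U ∧ G.E (ρ k) (ρ (k + 1))

def Follows (G : GameGraph V) (a : Fin 2) (f : V → V) (ρ : ℕ → V) : Prop :=
  ∀ k, G.owner (ρ k) = a → ρ (k + 1) = f (ρ k)

def WinsParity (P : V → ℕ) (a : Fin 2) (ρ : ℕ → V) : Prop :=
  ParityWin P ρ ↔ a = 0

lemma isSubarena_univ (G : GameGraph V) : G.IsSubarena univ :=
  fun v _ => (G.exists_succ v).imp fun w hw => ⟨mem_univ w, hw⟩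

lemma playIn_univ : G.PlayIn univ ρ ↔ IsPlay G ρ :=
  ⟨fun h k => (h k).2, fun h k => ⟨mem_univ _, h k⟩⟩

lemma PlayIn.mem_of_infOft (hρ : G.PlayIn U ρ) (hv : InfOft ρ v) : v ∈ U := by
  obtain ⟨k, -, rfl⟩ := hv 0
  exact (hρ k).1

lemma PlayIn.shift (hρ : G.PlayIn U ρ) (t : ℕ) : G.PlayIn U (fun s => ρ (t + s)) :=
  fun s => hρ (t + s)

lemma winsParity_shift {t : ℕ} : WinsParity P a (fun s => ρ (t + s)) ↔ WinsParity P a ρ := by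
  rw [WinsParity, WinsParity, parityWin_shift]

noncomputable def succIn (G : GameGraph V) (S : Set V) (v : V) : V :=
  if h : ∃ w ∈ S, G.E v w then h.choose else v

lemma succIn_spec {S : Set V} (h : ∃ w ∈ S, G.E v w) : G.succIn S v ∈ S ∧ G.E v (G.succIn S v) := by
  rw [succIn, dif_pos h]
  exact h.choose_spec

end Subgames

section Attractors

/-- The vertices from which player `a` can force, within `U`, a visit to `T` in at most `n`
moves. -/
def attrN (G : GameGraph V) (a : Fin 2) (U T : Set V) : ℕ → Set V
  | 0 => T
  | n + 1 => G.attrN a U T n ∪ {v ∈ U | (G.owner v = a ∧ ∃ w ∈ G.attrN a U T n, G.E v w) ∨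
      (G.owner v ≠ a ∧ ∀ w ∈ U, G.E v w → w ∈ G.attrN a U T n)}

def attr (G : GameGraph V) (a : Fin 2) (U T : Set V) : Set V :=
  ⋃ n, G.attrN a U T n

noncomputable def attrRank (G : GameGraph V) (a : Fin 2) (U T : Set V) (v : V) : ℕ :=
  sInf {n | v ∈ G.attrN a U T n}

lemma attrN_mono : Monotone (G.attrN a U T) :=
  monotone_nat_of_le_succ fun _ => subset_union_left

lemma subset_attr : T ⊆ G.attr a U T :=
  subset_iUnion (G.attrN a U T) 0

lemma attr_subset (hT : T ⊆ U) : G.attr a U T ⊆ U := by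
  refine iUnion_subset fun n => ?_
  induction n with
  | zero => exact hT
  | succ n ih => exact union_subset ih fun v hv => hv.1

lemma attrRank_le {n : ℕ} (h : v ∈ G.attrN a U T n) : G.attrRank a U T v ≤ n :=
  Nat.sInf_le h

lemma mem_attrN_attrRank (hv : v ∈ G.attr a U T) : v ∈ G.attrN a U T (G.attrRank a U T v) :=
  Nat.sInf_mem (mem_iUnion.1 hv)

lemma exists_attrRank_eq_succ (hv : v ∈ G.attr a U T) (hvT : v ∉ T) :
    ∃ m, G.attrRank a U T v = m + 1 ∧
      ((G.owner v = a ∧ ∃ w ∈ G.attrN a U T m, G.E v w) ∨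
        (G.owner v ≠ a ∧ ∀ w ∈ U, G.E v w → w ∈ G.attrN a U T m)) := by
  have hmem := mem_attrN_attrRank hv
  obtain ⟨m, hm⟩ : ∃ m, G.attrRank a U T v = m + 1 :=
    Nat.exists_eq_succ_of_ne_zero fun h => hvT (by rw [h] at hmem; exact hmem)
  rw [hm] at hmem
  rcases hmem with h | h
  · exact absurd (attrRank_le h) (by omega)
  · exact ⟨m, hm, h.2⟩

lemma mem_attr_of_owner_eq (hv : v ∈ U) (ho : G.owner v = a) (hw : w ∈ G.attr a U T)
    (hE : G.E v w) : v ∈ G.attr a U T := by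
  obtain ⟨n, hn⟩ := mem_iUnion.1 hw
  exact mem_iUnion.2 ⟨n + 1, Or.inr ⟨hv, Or.inl ⟨ho, w, hn, hE⟩⟩⟩

lemma mem_attr_of_owner_ne [Finite V] (hv : v ∈ U) (ho : G.owner v ≠ a)
    (h : ∀ w ∈ U, G.E v w → w ∈ G.attr a U T) : v ∈ G.attr a U T := by
  have : ∀ᶠ n in atTop, ∀ w, w ∈ U → G.E v w → w ∈ G.attrN a U T n := by
    refine eventually_all.2 fun w => ?_
    by_cases hw : w ∈ U ∧ G.E v w
    · obtain ⟨n, hn⟩ := mem_iUnion.1 (h w hw.1 hw.2)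
      exact eventually_atTop.2 ⟨n, fun m hm _ _ => attrN_mono hm hn⟩
    · exact Eventually.of_forall fun _ h1 h2 => absurd ⟨h1, h2⟩ hw
  obtain ⟨n, hn⟩ := this.exists
  exact mem_iUnion.2 ⟨n + 1, Or.inr ⟨hv, Or.inr ⟨ho, hn⟩⟩⟩

lemma mem_diff_attr_of_owner_eq (hv : v ∈ U \ G.attr a U T) (ho : G.owner v = a) (hw : w ∈ U)
    (hE : G.E v w) : w ∈ U \ G.attr a U T :=
  ⟨hw, fun hwA => hv.2 (mem_attr_of_owner_eq hv.1 ho hwA hE)⟩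

lemma IsSubarena.diff_attr [Finite V] (hU : G.IsSubarena U) :
    G.IsSubarena (U \ G.attr a U T) := by
  intro v hv
  by_cases ho : G.owner v = a
  · obtain ⟨w, hw, hE⟩ := hU v hv.1
    exact ⟨w, mem_diff_attr_of_owner_eq hv ho hw hE, hE⟩
  · by_contra! h
    exact hv.2 (mem_attr_of_owner_ne hv.1 ho fun w hw hE => by_contra fun hwA => h w ⟨hw, hwA⟩ hE)

lemma ncard_diff_attr_lt [Finite V] (hvU : v ∈ U) (hvT : v ∈ T) :
    (U \ G.attr a U T).ncard < U.ncard :=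
  ncard_lt_ncard (sdiff_ssubset_left_iff.2 ⟨v, hvU, subset_attr hvT⟩)

noncomputable def attrStrategy (G : GameGraph V) (a : Fin 2) (U T : Set V) (v : V) : V :=
  G.succIn (G.attrN a U T (G.attrRank a U T v - 1)) v

lemma attrStrategy_spec (hv : v ∈ G.attr a U T) (hvT : v ∉ T) (ho : G.owner v = a) :
    G.attrStrategy a U T v ∈ G.attr a U T ∧ G.E v (G.attrStrategy a U T v) ∧
      G.attrRank a U T (G.attrStrategy a U T v) < G.attrRank a U T v := by
  obtain ⟨m, hm, ⟨-, hsucc⟩ | ⟨ho', -⟩⟩ := exists_attrRank_eq_succ hv hvT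
  · have hspec := succIn_spec (G := G) (v := v) hsucc
    rw [attrStrategy, hm, Nat.add_sub_cancel]
    exact ⟨mem_iUnion.2 ⟨m, hspec.1⟩, hspec.2, Nat.lt_succ_of_le (attrRank_le hspec.1)⟩
  · exact absurd ho ho'

lemma attr_step_of_owner_ne (hv : v ∈ G.attr a U T) (hvT : v ∉ T) (ho : G.owner v ≠ a)
    (hw : w ∈ U) (hE : G.E v w) :
    w ∈ G.attr a U T ∧ G.attrRank a U T w < G.attrRank a U T v := by
  obtain ⟨m, hm, ⟨ho', -⟩ | ⟨-, hall⟩⟩ := exists_attrRank_eq_succ hv hvT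
  · exact absurd ho' ho
  · exact ⟨mem_iUnion.2 ⟨m, hall w hw hE⟩, hm ▸ Nat.lt_succ_of_le (attrRank_le (hall w hw hE))⟩

/-- The rank decreases at each step until the target is reached. -/
lemma exists_mem_of_follows_attrStrategy {f : V → V} (hρ : G.PlayIn U ρ) (hfol : G.Follows a f ρ)
    (hf : ∀ v ∈ G.attr a U T \ T, f v = G.attrStrategy a U T v) {t : ℕ}
    (ht : ρ t ∈ G.attr a U T) : ∃ s, t ≤ s ∧ ρ s ∈ T := by
  induction hr : G.attrRank a U T (ρ t) using Nat.strong_induction_on generalizing t with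
  | _ r ih =>
  by_cases hT : ρ t ∈ T
  · exact ⟨t, le_rfl, hT⟩
  have hnext : ρ (t + 1) ∈ G.attr a U T ∧
      G.attrRank a U T (ρ (t + 1)) < G.attrRank a U T (ρ t) := by
    by_cases ho : G.owner (ρ t) = a
    · rw [hfol t ho, hf _ ⟨ht, hT⟩]
      exact ⟨(attrStrategy_spec ht hT ho).1, (attrStrategy_spec ht hT ho).2.2⟩
    · exact attr_step_of_owner_ne ht hT ho (hρ (t + 1)).1 (hρ t).2
  obtain ⟨s, hs, hsT⟩ := ih _ (hr ▸ hnext.2) hnext.1 rfl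
  exact ⟨s, by omega, hsT⟩

end Attractors

section Dominions

structure IsDominion (G : GameGraph V) (P : V → ℕ) (a : Fin 2) (U W : Set V) (f : V → V) :
    Prop where
  subset : W ⊆ U
  move : ∀ v ∈ W, G.owner v = a → G.E v (f v) ∧ f v ∈ W
  trap : ∀ v ∈ W, G.owner v ≠ a → ∀ w ∈ U, G.E v w → w ∈ W
  wins : ∀ ρ, G.PlayIn U ρ → G.Follows a f ρ → ρ 0 ∈ W → WinsParity P a ρ

lemma isDominion_empty (f : V → V) : G.IsDominion P a U ∅ f where
  subset := empty_subset U
  move _ h := h.elim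
  trap _ h := h.elim
  wins _ _ _ h := h.elim

namespace IsDominion

variable {f : V → V}

lemma stays (h : G.IsDominion P a U W f) (hρ : G.PlayIn U ρ)
    (hf : ∀ k, ρ k ∈ W → G.owner (ρ k) = a → ρ (k + 1) = f (ρ k)) {t : ℕ} (ht : ρ t ∈ W) :
    ∀ s, t ≤ s → ρ s ∈ W := by
  refine Nat.le_induction ht fun s _ hs => ?_
  by_cases ho : G.owner (ρ s) = a
  · rw [hf s hs ho]
    exact (h.move _ hs ho).2
  · exact h.trap _ hs ho _ (hρ (s + 1)).1 (hρ s).2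

lemma wins_of_mem (h : G.IsDominion P a U W f) (hρ : G.PlayIn U ρ)
    (hf : ∀ k, ρ k ∈ W → G.owner (ρ k) = a → ρ (k + 1) = f (ρ k)) {t : ℕ} (ht : ρ t ∈ W) :
    WinsParity P a ρ := by
  have hstay := h.stays hρ hf ht
  refine winsParity_shift.1 (h.wins _ (hρ.shift t) (fun s ho => ?_) (by simpa using ht))
  exact hf (t + s) (hstay _ (by omega)) ho

lemma exists_valid (h : G.IsDominion P a U W f) (hU : G.IsSubarena U) :
    ∃ f', (∀ v ∈ U, G.owner v = a → G.E v (f' v)) ∧ G.IsDominion P a U W f' := by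
  refine ⟨W.piecewise f (G.succIn U), fun v hv ho => ?_, h.subset, fun v hv ho => ?_, h.trap,
    fun ρ hρ hfol h0 => h.wins_of_mem hρ (fun k hk ho => ?_) h0⟩
  · by_cases hvW : v ∈ W
    · rw [piecewise_eq_of_mem _ _ _ hvW]
      exact (h.move v hvW ho).1
    · rw [piecewise_eq_of_notMem _ _ _ hvW]
      exact (succIn_spec (hU v hv)).2
  · rw [piecewise_eq_of_mem _ _ _ hv]
    exact h.move v hv ho
  · rw [hfol k ho, piecewise_eq_of_mem _ _ _ hk]

lemma of_trap {U' : Set V} (h : G.IsDominion P a U' W f) (hU' : U' ⊆ U)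
    (htrap : ∀ v ∈ U', G.owner v ≠ a → ∀ w ∈ U, G.E v w → w ∈ U') :
    G.IsDominion P a U W f where
  subset := h.subset.trans hU'
  move := h.move
  trap v hv ho w hw hE := h.trap v hv ho w (htrap v (h.subset hv) ho w hw hE) hE
  wins ρ hρ hfol h0 := by
    have hW : ∀ s, ρ s ∈ W := by
      intro s
      induction s with
      | zero => exact h0
      | succ s ih =>
        by_cases ho : G.owner (ρ s) = a
        · exact hfol s ho ▸ (h.move _ ih ho).2
        · exact h.trap _ ih ho _ (htrap _ (h.subset ih) ho _ (hρ (s + 1)).1 (hρ s).2) (hρ s).2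
    exact h.wins ρ (fun s => ⟨h.subset (hW s), (hρ s).2⟩) hfol h0

lemma attr (h : G.IsDominion P a U W f) :
    G.IsDominion P a U (G.attr a U W) (W.piecewise f (G.attrStrategy a U W)) where
  subset := attr_subset h.subset
  move v hv ho := by
    by_cases hvW : v ∈ W
    · rw [piecewise_eq_of_mem _ _ _ hvW]
      exact ⟨(h.move v hvW ho).1, subset_attr (h.move v hvW ho).2⟩
    · rw [piecewise_eq_of_notMem _ _ _ hvW]
      exact ⟨(attrStrategy_spec hv hvW ho).2.1, (attrStrategy_spec hv hvW ho).1⟩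
  trap v hv ho w hw hE := by
    by_cases hvW : v ∈ W
    · exact subset_attr (h.trap v hvW ho w hw hE)
    · exact (attr_step_of_owner_ne hv hvW ho hw hE).1
  wins ρ hρ hfol h0 := by
    obtain ⟨t, -, ht⟩ := exists_mem_of_follows_attrStrategy hρ hfol
      (fun v hv => piecewise_eq_of_notMem _ _ _ hv.2) h0
    exact h.wins_of_mem hρ (fun k hk ho => by rw [hfol k ho, piecewise_eq_of_mem _ _ _ hk]) ht

/-- A play from `W` either stays in `W` or is trapped in `D` from the moment it enters `D`. -/
lemma union {D : Set V} {g : V → V} (hD : G.IsDominion P a U D f)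
    (hW : G.IsDominion P a (U \ D) W g) :
    G.IsDominion P a U (D ∪ W) (D.piecewise f g) where
  subset := union_subset hD.subset fun v hv => (hW.subset hv).1
  move v hv ho := by
    by_cases hvD : v ∈ D
    · rw [piecewise_eq_of_mem _ _ _ hvD]
      exact ⟨(hD.move v hvD ho).1, Or.inl (hD.move v hvD ho).2⟩
    · rw [piecewise_eq_of_notMem _ _ _ hvD]
      have hvW := hv.resolve_left hvD
      exact ⟨(hW.move v hvW ho).1, Or.inr (hW.move v hvW ho).2⟩
  trap v hv ho w hw hE := by
    by_cases hvD : v ∈ D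
    · exact Or.inl (hD.trap v hvD ho w hw hE)
    · by_cases hwD : w ∈ D
      · exact Or.inl hwD
      · exact Or.inr (hW.trap v (hv.resolve_left hvD) ho w ⟨hw, hwD⟩ hE)
  wins ρ hρ hfol h0 := by
    by_cases henter : ∃ t, ρ t ∈ D
    · obtain ⟨t, ht⟩ := henter
      exact hD.wins_of_mem hρ (fun k hk ho => by rw [hfol k ho, piecewise_eq_of_mem _ _ _ hk]) ht
    simp only [not_exists] at henter
    have hstay : ∀ s, ρ s ∈ W := by
      intro s
      induction s with
      | zero => exact h0.resolve_left (henter 0)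
      | succ s ih =>
        by_cases ho : G.owner (ρ s) = a
        · rw [hfol s ho, piecewise_eq_of_notMem _ _ _ (henter s)]
          exact (hW.move _ ih ho).2
        · exact hW.trap _ ih ho _ ⟨(hρ (s + 1)).1, henter (s + 1)⟩ (hρ s).2
    refine hW.wins ρ (fun s => ⟨hW.subset (hstay s), (hρ s).2⟩) (fun s ho => ?_) (hstay 0)
    rw [hfol s ho, piecewise_eq_of_notMem _ _ _ (henter s)]

end IsDominion

/-- A play that visits the top priority `p` infinitely often is won by `a`; one that does not
eventually avoids the attractor `A` of that priority, and is then a play of the subgame. -/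
lemma exists_isDominion_self_of_attr_top [Finite V] {p : ℕ} {g : V → V} (hU : G.IsSubarena U)
    (hmax : ∀ v ∈ U, P v ≤ p) (hp : Even p ↔ a = 0)
    (hg : G.IsDominion P a (U \ G.attr a U {v ∈ U | P v = p})
      (U \ G.attr a U {v ∈ U | P v = p}) g) :
    ∃ f, G.IsDominion P a U U f := by
  set N := {v ∈ U | P v = p}
  set A := G.attr a U N
  refine ⟨A.piecewise (N.piecewise (G.succIn U) (G.attrStrategy a U N)) g,
    subset_rfl, fun v hv ho => ?_, fun _ _ _ w hw _ => hw, fun ρ hρ hfol _ => ?_⟩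
  · by_cases hvA : v ∈ A
    · rw [piecewise_eq_of_mem _ _ _ hvA]
      by_cases hvN : v ∈ N
      · rw [piecewise_eq_of_mem _ _ _ hvN]
        exact (succIn_spec (hU v hv)).symm
      · rw [piecewise_eq_of_notMem _ _ _ hvN]
        have hspec := attrStrategy_spec hvA hvN ho
        exact ⟨hspec.2.1, attr_subset (sep_subset _ _) hspec.1⟩
    · rw [piecewise_eq_of_notMem _ _ _ hvA]
      exact ⟨(hg.move v ⟨hv, hvA⟩ ho).1, (hg.move v ⟨hv, hvA⟩ ho).2.1⟩
  by_cases hinf : ∃ᶠ k in atTop, ρ k ∈ N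
  · obtain ⟨v, ⟨hvU, hvp⟩, hv⟩ := exists_infOft_of_frequently hinf
    rw [WinsParity, parityWin_iff_of_infOft_max hv fun w hw => hvp ▸ hmax w (hρ.mem_of_infOft hw),
      hvp, hp]
  obtain ⟨n, hn⟩ := eventually_atTop.1 (not_frequently.1 hinf)
  have hnotA : ∀ k, n ≤ k → ρ k ∉ A := fun k hk hkA => by
    obtain ⟨s, hs, hsN⟩ := exists_mem_of_follows_attrStrategy hρ hfol
      (fun v hv => by rw [piecewise_eq_of_mem _ _ _ hv.1, piecewise_eq_of_notMem _ _ _ hv.2]) hkA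
    exact hn s (hk.trans hs) hsN
  refine winsParity_shift.1 (hg.wins _ (fun s => ⟨⟨(hρ _).1, hnotA _ (by omega)⟩, (hρ _).2⟩)
    (fun s ho => ?_) ⟨(hρ n).1, hnotA n le_rfl⟩)
  rw [← add_assoc, hfol _ ho, piecewise_eq_of_notMem _ _ _ (hnotA (n + s) (by omega))]

end Dominions

section Zielonka

def IsPositionallyDetermined (G : GameGraph V) (P : V → ℕ) (U : Set V) : Prop :=
  ∃ W : Fin 2 → Set V, W 0 ∪ W 1 = U ∧ ∀ a, ∃ f, G.IsDominion P a U (W a) f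

lemma isPositionallyDetermined_of_dominions (i : Fin 2) {Wi Wj : Set V} (hU : Wi ∪ Wj = U)
    (hi : ∃ f, G.IsDominion P i U Wi f) (hj : ∃ f, G.IsDominion P (1 - i) U Wj f) :
    G.IsPositionallyDetermined P U := by
  fin_cases i
  · exact ⟨![Wi, Wj], hU, Fin.forall_fin_two.2 ⟨hi, hj⟩⟩
  · exact ⟨![Wj, Wi], by rwa [union_comm], Fin.forall_fin_two.2 ⟨hj, hi⟩⟩

/-- Zielonka's theorem. Let `i` be the player favoured by the top priority and `A` its
`i`-attractor. If `1 - i` wins nowhere in the subgame outside `A`, then `i` wins everywhere.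
Otherwise the region of `1 - i` there is a dominion of the whole game, and so is its attractor `B`;
the regions of the subgame outside `B`, which `1 - i` cannot leave, complete the solution. -/
theorem isPositionallyDetermined [Finite V] (G : GameGraph V) (P : V → ℕ) {U : Set V}
    (hU : G.IsSubarena U) : G.IsPositionallyDetermined P U := by
  induction hn : U.ncard using Nat.strong_induction_on generalizing U with
  | _ n ih =>
  obtain rfl | hne := U.eq_empty_or_nonempty
  · exact ⟨fun _ => ∅, union_self _, fun _ => ⟨id, isDominion_empty id⟩⟩
  obtain ⟨m, hmU, hmax⟩ := U.exists_max_image P U.toFinite hne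
  obtain ⟨i, hi⟩ : ∃ i : Fin 2, Even (P m) ↔ i = 0 :=
    ⟨if Even (P m) then 0 else 1, by split_ifs with h <;> simp [h]⟩
  obtain ⟨X, hX, hXdom⟩ := ih _ (hn ▸ ncard_diff_attr_lt (a := i) hmU (T := {v ∈ U | P v = P m})
    ⟨hmU, rfl⟩) hU.diff_attr rfl
  rw [← fin_two_union_apply_one_sub X i] at hX
  rcases (X (1 - i)).eq_empty_or_nonempty with hXj | ⟨x, hx⟩
  · obtain ⟨g, hg⟩ := hXdom i
    rw [hXj, union_empty] at hX
    exact isPositionallyDetermined_of_dominions i (union_empty U)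
      (exists_isDominion_self_of_attr_top hU hmax hi (hX ▸ hg)) ⟨id, isDominion_empty id⟩
  obtain ⟨g, hg⟩ := hXdom (1 - i)
  have hXU : X (1 - i) ⊆ U := fun v hv => (hg.subset hv).1
  have hB := (hg.of_trap sdiff_subset fun v hv ho w hw hE =>
    mem_diff_attr_of_owner_eq hv (by simpa using fin_two_eq_one_sub_of_ne ho) hw hE).attr
  obtain ⟨Y, hY, hYdom⟩ := ih _ (hn ▸ ncard_diff_attr_lt (hXU hx) hx) hU.diff_attr rfl
  obtain ⟨fi, hfi⟩ := hYdom i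
  obtain ⟨fj, hfj⟩ := hYdom (1 - i)
  refine isPositionallyDetermined_of_dominions i (Wi := Y i)
    (Wj := G.attr (1 - i) U (X (1 - i)) ∪ Y (1 - i)) ?_
    ⟨fi, hfi.of_trap sdiff_subset fun v hv ho w hw hE => ?_⟩ ⟨_, hB.union hfj⟩
  · rw [← fin_two_union_apply_one_sub Y i] at hY
    rw [union_left_comm, hY, union_sdiff_cancel (attr_subset hXU)]
  · exact mem_diff_attr_of_owner_eq hv (fin_two_eq_one_sub_of_ne ho) hw hE

end Zielonka

section Subdivision

variable {Ec : Set (V × V)} {k n : ℕ}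

def subdivide (G : GameGraph V) (Ec : Set (V × V)) : GameGraph (V ⊕ Ec) where
  owner := Sum.elim G.owner fun _ => 1
  E x y := match x, y with
    | .inl u, .inl w => G.E u w ∧ (u, w) ∉ Ec
    | .inl u, .inr e => e.1.1 = u ∧ G.E u e.1.2
    | .inr e, .inl w => w = e.1.2
    | .inr _, .inr _ => False
  exists_succ
    | .inl u => by
      obtain ⟨w, hw⟩ := G.exists_succ u
      by_cases h : (u, w) ∈ Ec
      · exact ⟨.inr ⟨(u, w), h⟩, rfl, hw⟩
      · exact ⟨.inl w, hw, h⟩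
    | .inr e => ⟨.inl e.1.2, rfl⟩

def subdividePriority (d : ℕ) (P : V → ℕ) (Ec : Set (V × V)) : V ⊕ Ec → ℕ :=
  Sum.elim P fun _ => 2 * d + 2

def endpoint : V ⊕ Ec → V :=
  Sum.elim id fun e => e.1.2

lemma E_endpoint {u : V} {x : V ⊕ Ec} (h : (G.subdivide Ec).E (.inl u) x) :
    G.E u (endpoint x) := by
  rcases x with w | e
  exacts [h.1, h.2]

/-- The position in the lifted play of the `k`-th vertex of `ρ`. -/
noncomputable def stretch (Ec : Set (V × V)) (ρ : ℕ → V) : ℕ → ℕ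
  | 0 => 0
  | k + 1 => stretch Ec ρ k + if (ρ k, ρ (k + 1)) ∈ Ec then 2 else 1

lemma stretch_succ_of_mem (hk : (ρ k, ρ (k + 1)) ∈ Ec) :
    stretch Ec ρ (k + 1) = stretch Ec ρ k + 2 := by
  rw [stretch, if_pos hk]

lemma stretch_succ_of_notMem (hk : (ρ k, ρ (k + 1)) ∉ Ec) :
    stretch Ec ρ (k + 1) = stretch Ec ρ k + 1 := by
  rw [stretch, if_neg hk]

lemma strictMono_stretch : StrictMono (stretch Ec ρ) :=
  strictMono_nat_of_lt_succ fun k => by rw [stretch]; split <;> omega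

lemma le_stretch (k : ℕ) : k ≤ stretch Ec ρ k :=
  strictMono_stretch.id_le k

lemma exists_lt_stretch_succ (n : ℕ) : ∃ k, n < stretch Ec ρ (k + 1) :=
  ⟨n, Nat.lt_of_lt_of_le (Nat.lt_succ_self n) (le_stretch _)⟩

/-- The `k` with `stretch k ≤ n < stretch (k + 1)`. -/
noncomputable def block (Ec : Set (V × V)) (ρ : ℕ → V) (n : ℕ) : ℕ :=
  Nat.find (exists_lt_stretch_succ (Ec := Ec) (ρ := ρ) n)

lemma stretch_block_le : stretch Ec ρ (block Ec ρ n) ≤ n := by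
  rcases h : block Ec ρ n with _ | k
  · exact Nat.zero_le n
  · exact not_lt.1 (Nat.find_min (exists_lt_stretch_succ n) (show k < block Ec ρ n by omega))

lemma lt_stretch_block_succ : n < stretch Ec ρ (block Ec ρ n + 1) :=
  Nat.find_spec (exists_lt_stretch_succ n)

lemma block_eq (h₁ : stretch Ec ρ k ≤ n) (h₂ : n < stretch Ec ρ (k + 1)) : block Ec ρ n = k := by
  have h₃ := stretch_block_le (Ec := Ec) (ρ := ρ) (n := n)
  have h₄ := lt_stretch_block_succ (Ec := Ec) (ρ := ρ) (n := n)
  have := strictMono_stretch.lt_iff_lt.1 (h₃.trans_lt h₂)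
  have := strictMono_stretch.lt_iff_lt.1 (h₁.trans_lt h₄)
  omega

/-- `ρ` with the subdividing vertex inserted into each co-live edge it takes. -/
noncomputable def liftPlay (Ec : Set (V × V)) (ρ : ℕ → V) (n : ℕ) : V ⊕ Ec :=
  let k := block Ec ρ n
  if h : stretch Ec ρ k ≠ n ∧ (ρ k, ρ (k + 1)) ∈ Ec then .inr ⟨_, h.2⟩ else .inl (ρ k)

lemma liftPlay_stretch (k : ℕ) : liftPlay Ec ρ (stretch Ec ρ k) = .inl (ρ k) := by
  simp [liftPlay, block_eq le_rfl (strictMono_stretch k.lt_succ_self)]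

lemma liftPlay_stretch_add_one (hk : (ρ k, ρ (k + 1)) ∈ Ec) :
    liftPlay Ec ρ (stretch Ec ρ k + 1) = .inr ⟨_, hk⟩ := by
  have hb : block Ec ρ (stretch Ec ρ k + 1) = k :=
    block_eq (Nat.le_succ _) (by rw [stretch_succ_of_mem hk]; omega)
  simp [liftPlay, hb, hk]

lemma liftPlay_zero : liftPlay Ec ρ 0 = .inl (ρ 0) :=
  liftPlay_stretch 0

lemma eq_stretch_or_eq_stretch_add_one (Ec : Set (V × V)) (ρ : ℕ → V) (n : ℕ) :
    (∃ k, n = stretch Ec ρ k) ∨ ∃ k, (ρ k, ρ (k + 1)) ∈ Ec ∧ n = stretch Ec ρ k + 1 := by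
  set k := block Ec ρ n
  have h₁ : stretch Ec ρ k ≤ n := stretch_block_le
  have h₂ : n < stretch Ec ρ (k + 1) := lt_stretch_block_succ
  by_cases hk : (ρ k, ρ (k + 1)) ∈ Ec
  · rw [stretch_succ_of_mem hk] at h₂
    rcases (show n = stretch Ec ρ k ∨ n = stretch Ec ρ k + 1 by omega) with h | h
    exacts [.inl ⟨k, h⟩, .inr ⟨k, hk, h⟩]
  · rw [stretch_succ_of_notMem hk] at h₂
    exact .inl ⟨k, by omega⟩

lemma liftPlay_eq_inl {x : V} (h : liftPlay Ec ρ n = .inl x) :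
    ∃ k, n = stretch Ec ρ k ∧ ρ k = x := by
  rcases eq_stretch_or_eq_stretch_add_one Ec ρ n with ⟨k, rfl⟩ | ⟨k, hk, rfl⟩
  · rw [liftPlay_stretch] at h
    exact ⟨k, rfl, Sum.inl.inj h⟩
  · simp [liftPlay_stretch_add_one hk] at h

lemma liftPlay_eq_inr {e : Ec} (h : liftPlay Ec ρ n = .inr e) :
    ∃ k, n = stretch Ec ρ k + 1 ∧ (ρ k, ρ (k + 1)) = e.1 := by
  rcases eq_stretch_or_eq_stretch_add_one Ec ρ n with ⟨k, rfl⟩ | ⟨k, hk, rfl⟩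
  · simp [liftPlay_stretch] at h
  · rw [liftPlay_stretch_add_one hk] at h
    exact ⟨k, rfl, congrArg Subtype.val (Sum.inr.inj h)⟩

lemma infOft_liftPlay_inl {x : V} : InfOft (liftPlay Ec ρ) (.inl x) ↔ InfOft ρ x := by
  refine ⟨fun h n => ?_, fun h n => ?_⟩
  · obtain ⟨m, hm, hx⟩ := h (stretch Ec ρ n)
    obtain ⟨k, rfl, hk⟩ := liftPlay_eq_inl hx
    exact ⟨k, strictMono_stretch.le_iff_le.1 hm, hk⟩
  · obtain ⟨k, hk, rfl⟩ := h n
    exact ⟨stretch Ec ρ k, hk.trans (le_stretch k), liftPlay_stretch k⟩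

lemma infOft_liftPlay_inr {e : Ec} : InfOft (liftPlay Ec ρ) (.inr e) ↔ EdgeInfOft ρ e.1 := by
  refine ⟨fun h n => ?_, fun h n => ?_⟩
  · obtain ⟨m, hm, he⟩ := h (stretch Ec ρ n + 1)
    obtain ⟨k, rfl, hk⟩ := liftPlay_eq_inr he
    exact ⟨k, (strictMono_stretch (Ec := Ec) (ρ := ρ)).le_iff_le.1 (by omega), by rw [← hk],
      by rw [← hk]⟩
  · obtain ⟨k, hk, h₁, h₂⟩ := h n
    have hke : (ρ k, ρ (k + 1)) = e.1 := by rw [h₁, h₂]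
    refine ⟨stretch Ec ρ k + 1, by have := le_stretch (Ec := Ec) (ρ := ρ) k; omega, ?_⟩
    rw [liftPlay_stretch_add_one (hke ▸ e.2)]
    exact congrArg Sum.inr (Subtype.ext hke)

lemma isPlay_liftPlay (hρ : IsPlay G ρ) : IsPlay (G.subdivide Ec) (liftPlay Ec ρ) := by
  intro n
  rcases eq_stretch_or_eq_stretch_add_one Ec ρ n with ⟨k, rfl⟩ | ⟨k, hk, rfl⟩
  · by_cases hk : (ρ k, ρ (k + 1)) ∈ Ec
    · rw [liftPlay_stretch, liftPlay_stretch_add_one hk]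
      exact ⟨rfl, hρ k⟩
    · rw [liftPlay_stretch, ← stretch_succ_of_notMem hk, liftPlay_stretch]
      exact ⟨hρ k, hk⟩
  · rw [liftPlay_stretch_add_one hk, ← stretch_succ_of_mem hk, liftPlay_stretch]
    rfl

lemma follows_liftPlay {f : V ⊕ Ec → V ⊕ Ec}
    (hf : ∀ x, (G.subdivide Ec).owner x = a → (G.subdivide Ec).E x (f x))
    (hρ : ∀ k, G.owner (ρ k) = a → ρ (k + 1) = endpoint (f (.inl (ρ k)))) :
    (G.subdivide Ec).Follows a f (liftPlay Ec ρ) := by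
  intro n ho
  rcases eq_stretch_or_eq_stretch_add_one Ec ρ n with ⟨k, rfl⟩ | ⟨k, hk, rfl⟩
  · rw [liftPlay_stretch] at ho ⊢
    have hstep := hρ k ho
    have hE := hf _ ho
    rcases hfk : f (.inl (ρ k)) with w | e
    · rw [hfk] at hE hstep
      rw [← stretch_succ_of_notMem (hstep ▸ hE.2), liftPlay_stretch, hstep]
      rfl
    · rw [hfk] at hE hstep
      have hke : (ρ k, ρ (k + 1)) = e.1 := by rw [hstep, ← hE.1]; rfl
      rw [liftPlay_stretch_add_one (hke ▸ e.2)]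
      exact congrArg Sum.inr (Subtype.ext hke)
  · rw [liftPlay_stretch_add_one hk] at ho ⊢
    have hE := hf _ ho
    rcases hfk : f (.inr ⟨_, hk⟩) with w | e
    · rw [hfk] at hE
      rw [← stretch_succ_of_mem hk, liftPlay_stretch, hE]
    · rw [hfk] at hE
      exact hE.elim

lemma parityWin_liftPlay_iff {d : ℕ} (hP : ∀ v, P v ≤ d) :
    ParityWin (subdividePriority d P Ec) (liftPlay Ec ρ) ↔ (psiColive Ec ρ → ParityWin P ρ) := by
  constructor
  · rintro ⟨x | e, hx, heven, hmax⟩ hψ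
    · exact ⟨x, infOft_liftPlay_inl.1 hx, heven,
        fun w hw => hmax (.inl w) (infOft_liftPlay_inl.2 hw)⟩
    · exact absurd (infOft_liftPlay_inr.1 hx) (hψ e.1 e.2)
  intro h
  by_cases hψ : psiColive Ec ρ
  · obtain ⟨x, hx, heven, hmax⟩ := h hψ
    refine ⟨.inl x, infOft_liftPlay_inl.2 hx, heven, ?_⟩
    rintro (w | e) hw
    · exact hmax w (infOft_liftPlay_inl.1 hw)
    · exact absurd (infOft_liftPlay_inr.1 hw) (hψ e.1 e.2)
  simp only [psiColive, not_forall, not_not] at hψ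
  obtain ⟨e, he, hinf⟩ := hψ
  refine ⟨.inr ⟨e, he⟩, infOft_liftPlay_inr.2 hinf, ⟨d + 1, ?_⟩, ?_⟩
  · simp only [subdividePriority, Sum.elim_inr]
    ring
  rintro (w | _) -
  · simp only [subdividePriority, Sum.elim_inl, Sum.elim_inr]
    have := hP w
    omega
  · exact le_rfl

lemma colive_parity_iff_of_isDominion {d : ℕ} (hP : ∀ v, P v ≤ d) {f : V ⊕ Ec → V ⊕ Ec}
    {W : Set (V ⊕ Ec)} (hdom : (G.subdivide Ec).IsDominion (subdividePriority d P Ec) a univ W f)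
    (hf : ∀ x, (G.subdivide Ec).owner x = a → (G.subdivide Ec).E x (f x))
    (hρ : IsPlay G ρ) (hfol : ∀ k, G.owner (ρ k) = a → ρ (k + 1) = endpoint (f (.inl (ρ k))))
    (h0 : .inl (ρ 0) ∈ W) :
    (psiColive Ec ρ → ParityWin P ρ) ↔ a = 0 := by
  rw [← parityWin_liftPlay_iff hP]
  exact hdom.wins _ (playIn_univ.2 (isPlay_liftPlay hρ)) (follows_liftPlay hf hfol)
    (liftPlay_zero ▸ h0)

end Subdivision

section Outcome

variable {σ : Strategy V} {g : V → V}

noncomputable def outcome (G : GameGraph V) (σ : Strategy V) (g : V → V) (v : V) : ℕ → V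
  | 0 => v
  | k + 1 =>
    if G.owner (G.outcome σ g v k) = 0 then
      σ (List.ofFn fun j : Fin k => G.outcome σ g v j) (G.outcome σ g v k)
    else g (G.outcome σ g v k)
decreasing_by all_goals omega

lemma outcome_zero : G.outcome σ g v 0 = v := by
  rw [outcome]

lemma outcome_succ (k : ℕ) : G.outcome σ g v (k + 1) =
    if G.owner (G.outcome σ g v k) = 0 then
      σ (List.ofFn fun j : Fin k => G.outcome σ g v j) (G.outcome σ g v k)
    else g (G.outcome σ g v k) := by
  rw [outcome]

lemma compliant_outcome : Compliant G 0 σ (G.outcome σ g v) := fun k ho => by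
  rw [outcome_succ, if_pos ho]

lemma outcome_succ_of_owner_ne (k : ℕ) (ho : G.owner (G.outcome σ g v k) ≠ 0) :
    G.outcome σ g v (k + 1) = g (G.outcome σ g v k) := by
  rw [outcome_succ, if_neg ho]

lemma isPlay_outcome (hσ : StratValid G 0 σ) (hg : ∀ u, G.owner u = 1 → G.E u (g u)) :
    IsPlay G (G.outcome σ g v) := fun k => by
  by_cases ho : G.owner (G.outcome σ g v k) = 0
  · rw [compliant_outcome k ho]
    exact hσ _ _ ho
  · rw [outcome_succ_of_owner_ne k ho]
    exact hg _ (fin_two_eq_one_sub_of_ne ho)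

end Outcome

variable {Ec : Set (V × V)} {d : ℕ}

lemma winsFrom_of_isDominion (hP : ∀ v, P v ≤ d) {f : V ⊕ Ec → V ⊕ Ec} {W : Set (V ⊕ Ec)}
    (hdom : (G.subdivide Ec).IsDominion (subdividePriority d P Ec) 0 univ W f)
    (hf : ∀ x, (G.subdivide Ec).owner x = 0 → (G.subdivide Ec).E x (f x)) (hv : .inl v ∈ W) :
    WinsFrom G 0 {ρ | psiColive Ec ρ → ParityWin P ρ} (fun _ u => endpoint (f (.inl u))) v :=
  ⟨fun _ u hu => E_endpoint (hf (.inl u) hu), fun _ hρ hcomp h0 =>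
    (colive_parity_iff_of_isDominion hP hdom hf hρ hcomp (h0 ▸ hv)).2 rfl⟩

/-- Play player 0's winning strategy in `G` against the restriction of `f`. -/
lemma inl_notMem_of_mem_winRegion (hP : ∀ v, P v ≤ d) {f : V ⊕ Ec → V ⊕ Ec}
    {W : Set (V ⊕ Ec)} (hdom : (G.subdivide Ec).IsDominion (subdividePriority d P Ec) 1 univ W f)
    (hf : ∀ x, (G.subdivide Ec).owner x = 1 → (G.subdivide Ec).E x (f x))
    (hv : v ∈ WinRegion G 0 {ρ | psiColive Ec ρ → ParityWin P ρ}) : .inl v ∉ W := by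
  intro hvW
  obtain ⟨σ, hσ, hwin⟩ := hv
  set g := fun u => endpoint (f (.inl u))
  have hρ := isPlay_outcome (g := g) (v := v) hσ fun u hu => E_endpoint (hf (.inl u) hu)
  have hfol (k : ℕ) (hk : G.owner (G.outcome σ g v k) = 1) :=
    outcome_succ_of_owner_ne (σ := σ) (g := g) (v := v) k (by rw [hk]; decide)
  exact one_ne_zero ((colive_parity_iff_of_isDominion hP hdom hf hρ hfol
    (by rwa [outcome_zero])).1 (hwin _ hρ compliant_outcome outcome_zero))

end GameGraph

theorem stmt0 (V : Type) [Fintype V] (G : GameGraph V)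
    (P : V → ℕ)
    (Ec : Set (V × V)) :
    ∃ σ : Strategy V, Positional σ ∧
      ∀ v ∈ WinRegion G 0 {ρ | psiColive Ec ρ → ParityWin P ρ},
        WinsFrom G 0 {ρ | psiColive Ec ρ → ParityWin P ρ} σ v := by
  have hP (v : V) : P v ≤ Finset.univ.sup P := Finset.le_sup (Finset.mem_univ v)
  obtain ⟨W, hW, hdom⟩ := (G.subdivide Ec).isPositionallyDetermined
    (GameGraph.subdividePriority (Finset.univ.sup P) P Ec) (G.subdivide Ec).isSubarena_univ
  choose f hf hfdom using fun a => (hdom a).choose_spec.exists_valid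
    (G.subdivide Ec).isSubarena_univ
  refine ⟨fun _ u => GameGraph.endpoint (f 0 (.inl u)), fun _ _ _ => rfl, fun v hv => ?_⟩
  have hv0 : .inl v ∈ W 0 := (hW ▸ mem_univ _ : Sum.inl v ∈ W 0 ∪ W 1).resolve_right
    (GameGraph.inl_notMem_of_mem_winRegion hP (hfdom 1) (fun x => hf 1 x (mem_univ x)) hv)
  exact GameGraph.winsFrom_of_isDominion hP (hfdom 0) (fun x => hf 0 x (mem_univ x)) hv0
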